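/- arXiv:2006.12642 — 2 statements merged into one kernel-verified Lean document; each statement's English description precedes it below -/
import Mathlib

section
/- Let N, q, m be integers with (q+1)/2 + 1 ≤ m ≤ q-2 and m ≤ N-1, and let p ∈ (0,1). Define M¹(m) = ((1-p)²/p) · (N-m)(q-m-1) / ((2m+3-q)(2m+2-q)). Then the second forward quotient M¹(m)/M¹(m-1) equals ((2m-q)(2m-q+1)(N-m)(q-m-1)) / ((2m-q+2)(2m-q+3)(N-m+1)(q-m)), and this quantity is strictly less than 1 whenever all factors appearing are positive. -/
/-!
The constant `(1 - p)² / p` cancels in `M m / M (m - 1)`, leaving a product of the four ratios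
`x / (x + 2)`, `(x + 1) / (x + 3)`, `a / (a + 1)`, `b / (b + 1)` with `x = 2m - q ≥ 3`,
`a = N - m ≥ 1` and `b = q - m - 1 ≥ 1`; each lies in `[0, 1)`, so the product is below `1`.
-/

lemma div_pred_eq_of_eq_const_mul_div {M f g : ℤ → ℝ} {C : ℝ}
    (hM : ∀ k, M k = C * f k / g k) (hC : C ≠ 0) {m : ℤ}
    (hf : f (m - 1) ≠ 0) (hg : g m ≠ 0) (hg' : g (m - 1) ≠ 0) :
    M m / M (m - 1) = f m * g (m - 1) / (f (m - 1) * g m) := by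
  rw [hM, hM]
  field_simp

lemma mul_mul_mul_div_shift_lt_one {x a b : ℝ} (hx : 0 ≤ x) (ha : 0 ≤ a) (hb : 0 ≤ b) :
    x * (x + 1) * a * b / ((x + 2) * (x + 3) * (a + 1) * (b + 1)) < 1 := by
  rw [div_lt_one (by positivity)]
  have hx' : x * (x + 1) < (x + 2) * (x + 3) := by nlinarith
  exact mul_lt_mul'' (mul_lt_mul'' hx' (lt_add_one a) (by positivity) ha) (lt_add_one b)
    (by positivity) hb

/-- The second forward quotient
`M¹(m)/M¹(m-1) = (2m-q)(2m-q+1)(N-m)(q-m-1) / ((2m-q+2)(2m-q+3)(N-m+1)(q-m))`,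
and it is strictly less than 1. -/
theorem second_forward_quotient (N q m : ℤ)
    (hlow : ((q : ℝ) + 1) / 2 + 1 ≤ (m : ℝ)) (hhigh : m ≤ q - 2) (hmN : m ≤ N - 1)
    (p : ℝ) (hp : p ∈ Set.Ioo (0 : ℝ) 1)
    (M : ℤ → ℝ)
    (hM : ∀ k : ℤ, M k = ((1 - p) ^ 2 / p) * (((N : ℝ) - k) * ((q : ℝ) - k - 1)) /
        ((2 * (k : ℝ) + 3 - q) * (2 * (k : ℝ) + 2 - q))) :
    M m / M (m - 1)
        = ((2 * (m : ℝ) - q) * (2 * (m : ℝ) - q + 1) * ((N : ℝ) - m) * ((q : ℝ) - m - 1)) /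
          ((2 * (m : ℝ) - q + 2) * (2 * (m : ℝ) - q + 3) * ((N : ℝ) - m + 1) * ((q : ℝ) - m))
      ∧ M m / M (m - 1) < 1 := by
  obtain ⟨hp0, hp1⟩ := hp
  have hC : (1 - p) ^ 2 / p ≠ 0 := div_ne_zero (pow_ne_zero 2 (sub_ne_zero.2 hp1.ne')) hp0.ne'
  have hq : (m : ℝ) ≤ q - 2 := by exact_mod_cast hhigh
  have hN : (m : ℝ) ≤ N - 1 := by exact_mod_cast hmN
  have hx : (3 : ℝ) ≤ 2 * m - q := by linarith
  have heq := div_pred_eq_of_eq_const_mul_div hM hC (m := m)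
    (by push_cast; exact (mul_pos (by linarith) (by linarith)).ne')
    (mul_pos (by linarith) (by linarith)).ne'
    (by push_cast; exact (mul_pos (by linarith) (by linarith)).ne')
  rw [heq]
  refine ⟨by congr 1 <;> push_cast <;> ring, ?_⟩
  convert mul_mul_mul_div_shift_lt_one (x := 2 * m - q) (a := N - m) (b := q - m - 1)
    (by linarith) (by linarith) (by linarith) using 2 <;> push_cast <;> ring
end

section
/- Fix d > 1/2 and p ∈ (0,1). Let N+1 = dq with q an integer satisfying q > max{4, 5/(2d-1)} (and large enough that the forward quotient at the minimal index exceeds 1 and at the maximal index is below 1). Then the sequence m ↦ E_m = C(N,m+1)·C(m+1,q-m-2)·p^{q-m-2}·(1-p)^{2m+3-q} of expected reduced Betti numbers of the Bernoulli random quota complex is unimodal in m. -/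
/-- Binomial coefficient allowing an integer lower argument, vanishing when it is
negative or exceeds the upper argument. -/
noncomputable def chooseZ (n : ℕ) (k : ℤ) : ℝ :=
  if 0 ≤ k then (n.choose k.toNat : ℝ) else 0

/-- The expected `m`-th reduced Betti number of the Bernoulli random quota complex
with `N+1` vertices, quota `q`, and Bernoulli probability `p`. -/
noncomputable def expectedBetti (N q : ℕ) (p : ℝ) (m : ℕ) : ℝ :=
  chooseZ N (m + 1) * chooseZ (m + 1) ((q : ℤ) - m - 2) *
    p ^ ((q : ℤ) - m - 2) * (1 - p) ^ (2 * (m : ℤ) + 3 - q)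

/-- Log-concavity of a row of Pascal's triangle. -/
lemma choose_row_logconcave (N s : ℕ) :
    N.choose s * N.choose (s + 2) ≤ (N.choose (s + 1)) ^ 2 := by
  rcases le_or_gt (s + 2) N with h | h
  · obtain ⟨t, rfl⟩ : ∃ t, N = s + 2 + t := ⟨N - (s + 2), by omega⟩
    have h1 : (s+2+t).choose (s+1) * (s+1) = (s+2+t).choose s * (t+2) := by
      have := Nat.choose_succ_right_eq (s+2+t) s
      have e : s+2+t - s = t+2 := by omega
      rw [e] at this; exact this
    have h2 : (s+2+t).choose (s+2) * (s+2) = (s+2+t).choose (s+1) * (t+1) := by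
      have := Nat.choose_succ_right_eq (s+2+t) (s+1)
      have e : s+2+t - (s+1) = t+1 := by omega
      rw [e] at this; exact this
    set a := (s+2+t).choose s with ha
    set b := (s+2+t).choose (s+1) with hb
    set c := (s+2+t).choose (s+2) with hc
    refine Nat.le_of_mul_le_mul_right ?_ (show 0 < (t+2)*(s+2) by positivity)
    calc a * c * ((t+2)*(s+2)) = (a*(t+2)) * (c*(s+2)) := by ring
      _ = (b*(s+1)) * (b*(t+1)) := by rw [← h1, ← h2]
      _ = (b*b) * ((s+1)*(t+1)) := by ring
      _ ≤ (b*b) * ((t+2)*(s+2)) := Nat.mul_le_mul_left _ (by nlinarith)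
      _ = b^2 * ((t+2)*(s+2)) := by ring
  · have : N.choose (s+2) = 0 := Nat.choose_eq_zero_of_lt h
    simp [this]

/-- Log-concavity of Pascal's triangle along a diagonal direction. -/
lemma choose_diag_logconcave (n κ : ℕ) (h : κ + 2 ≤ n) :
    n.choose (κ + 2) * (n + 2).choose κ ≤ ((n + 1).choose (κ + 1)) ^ 2 := by
  obtain ⟨t, rfl⟩ : ∃ t, n = κ + 2 + t := ⟨n - (κ + 2), by omega⟩
  set n := κ + 2 + t with hn
  have i1a : n.choose (κ+2) * (n+1) = (n+1).choose (κ+2) * (t+1) := by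
    have := Nat.choose_mul_succ_eq n (κ+2)
    have e : n + 1 - (κ+2) = t+1 := by omega
    rw [e] at this; exact this
  have i1b : (n+1).choose (κ+2) * (κ+2) = (n+1).choose (κ+1) * (t+2) := by
    have := Nat.choose_succ_right_eq (n+1) (κ+1)
    have e : n + 1 - (κ+1) = t+2 := by omega
    rw [e] at this; exact this
  have i2a : (n+1).choose (κ+1) * (n+2) = (n+2).choose (κ+1) * (t+3) := by
    have := Nat.choose_mul_succ_eq (n+1) (κ+1)
    have e : n + 1 + 1 - (κ+1) = t+3 := by omega
    rw [e] at this
    have e2 : n + 1 + 1 = n + 2 := by omega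
    rw [e2] at this; exact this
  have i2b : (n+2).choose (κ+1) * (κ+1) = (n+2).choose κ * (t+4) := by
    have := Nat.choose_succ_right_eq (n+2) κ
    have e : n + 2 - κ = t+4 := by omega
    rw [e] at this; exact this
  set a := n.choose (κ+2) with hA
  set b := (n+1).choose (κ+1) with hB
  set c := (n+2).choose κ with hC
  set b' := (n+1).choose (κ+2) with hB'
  set c' := (n+2).choose (κ+1) with hC'
  have i1 : a * ((n+1)*(κ+2)) = b * ((t+1)*(t+2)) := by
    calc a * ((n+1)*(κ+2)) = (a*(n+1)) * (κ+2) := by ring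
      _ = (b'*(t+1)) * (κ+2) := by rw [i1a]
      _ = (b'*(κ+2)) * (t+1) := by ring
      _ = (b*(t+2)) * (t+1) := by rw [i1b]
      _ = b * ((t+1)*(t+2)) := by ring
  have i2 : b * ((n+2)*(κ+1)) = c * ((t+3)*(t+4)) := by
    calc b * ((n+2)*(κ+1)) = (b*(n+2)) * (κ+1) := by ring
      _ = (c'*(t+3)) * (κ+1) := by rw [i2a]
      _ = (c'*(κ+1)) * (t+3) := by ring
      _ = (c*(t+4)) * (t+3) := by rw [i2b]
      _ = c * ((t+3)*(t+4)) := by ring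
  refine Nat.le_of_mul_le_mul_right ?_
    (show 0 < (n+1)*(κ+2)*((t+3)*(t+4)) by positivity)
  calc a * c * ((n+1)*(κ+2)*((t+3)*(t+4)))
      = (a * ((n+1)*(κ+2))) * (c * ((t+3)*(t+4))) := by ring
    _ = (b * ((t+1)*(t+2))) * (b * ((n+2)*(κ+1))) := by rw [i1, ← i2]
    _ = (b*b) * ((t+1)*(t+2)*((n+2)*(κ+1))) := by ring
    _ ≤ (b*b) * ((n+1)*(κ+2)*((t+3)*(t+4))) := by
        refine Nat.mul_le_mul_left _ ?_
        calc (t+1)*(t+2)*((n+2)*(κ+1)) = ((t+1)*(t+2))*((κ+t+4)*(κ+1)) := by rw [hn]; ring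
          _ ≤ ((t+3)*(t+4))*((κ+t+3)*(κ+2)) := by
              refine Nat.mul_le_mul (by nlinarith) (by nlinarith)
          _ = (n+1)*(κ+2)*((t+3)*(t+4)) := by rw [hn]; ring
    _ = b^2 * ((n+1)*(κ+2)*((t+3)*(t+4))) := by ring

lemma chooseZ_nonneg (n : ℕ) (k : ℤ) : 0 ≤ chooseZ n k := by
  unfold chooseZ; split <;> positivity

lemma expectedBetti_nonneg {p : ℝ} (hp0 : 0 < p) (hp1 : p < 1) (N q m : ℕ) :
    0 ≤ expectedBetti N q p m := by
  unfold expectedBetti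
  have h1 : (0:ℝ) < 1 - p := by linarith
  exact mul_nonneg (mul_nonneg (mul_nonneg (chooseZ_nonneg _ _) (chooseZ_nonneg _ _))
    (zpow_pos hp0 _).le) (zpow_pos h1 _).le

/-- Closed form of `expectedBetti` with explicit natural exponents. -/
lemma expectedBetti_eq (N q : ℕ) (p : ℝ) (m a b : ℕ) (ha : q = m + 2 + a)
    (hb : 2 * m + 3 = q + b) :
    expectedBetti N q p m =
      (N.choose (m+1) : ℝ) * ((m+1).choose a : ℝ) * p ^ a * (1 - p) ^ b := by
  unfold expectedBetti chooseZ
  have e0 : ((m:ℤ) + 1) = ((m + 1 : ℕ) : ℤ) := by push_cast; ring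
  have e1 : (q:ℤ) - m - 2 = ((a : ℕ) : ℤ) := by omega
  have e2 : 2*(m:ℤ) + 3 - q = ((b : ℕ) : ℤ) := by omega
  rw [e0, e1, e2, zpow_natCast, zpow_natCast, if_pos (Int.natCast_nonneg _),
    if_pos (Int.natCast_nonneg _), Int.toNat_natCast, Int.toNat_natCast]

lemma expectedBetti_pos {p : ℝ} (hp0 : 0 < p) (hp1 : p < 1) {N q m : ℕ}
    (h1 : m + 1 ≤ N) (h2 : m + 2 ≤ q) (h3 : q ≤ 2 * m + 3) :
    0 < expectedBetti N q p m := by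
  rw [expectedBetti_eq N q p m (q - (m+2)) (2*m+3-q) (by omega) (by omega)]
  have c1 : 0 < N.choose (m+1) := Nat.choose_pos h1
  have c2 : 0 < (m+1).choose (q - (m+2)) := Nat.choose_pos (by omega)
  have h4 : (0:ℝ) < 1 - p := by linarith
  have := pow_pos hp0 (q - (m+2))
  have := pow_pos h4 (2*m+3-q)
  positivity

lemma expectedBetti_support {p : ℝ} {N q m : ℕ} (h : expectedBetti N q p m ≠ 0) :
    m + 1 ≤ N ∧ m + 2 ≤ q ∧ q ≤ 2 * m + 3 := by
  unfold expectedBetti chooseZ at h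
  refine ⟨?_, ?_, ?_⟩
  · by_contra h'
    apply h
    rw [if_pos (show (0:ℤ) ≤ (m:ℤ)+1 by omega)]
    have : N.choose (((m:ℤ)+1).toNat) = 0 := Nat.choose_eq_zero_of_lt (by omega)
    rw [this, Nat.cast_zero, zero_mul, zero_mul, zero_mul]
  · by_contra h'
    apply h
    rw [if_neg (show ¬ (0:ℤ) ≤ (q:ℤ) - m - 2 by omega)]
    rw [mul_zero, zero_mul, zero_mul]
  · by_contra h'
    apply h
    rw [if_pos (show (0:ℤ) ≤ (q:ℤ) - m - 2 by omega)]
    have : (m+1).choose (((q:ℤ) - m - 2).toNat) = 0 := Nat.choose_eq_zero_of_lt (by omega)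
    rw [this, Nat.cast_zero, mul_zero, zero_mul, zero_mul]

lemma expectedBetti_zero_of_lt {p : ℝ} {N q m : ℕ} (h : q < m + 2) :
    expectedBetti N q p m = 0 := by
  unfold expectedBetti chooseZ
  rw [if_neg (show ¬ (0:ℤ) ≤ (q:ℤ) - m - 2 by omega)]
  rw [mul_zero, zero_mul, zero_mul]

/-- Log-concavity of the expected Betti numbers on the interior of the support. -/
lemma expectedBetti_logconcave {p : ℝ} (hp0 : 0 < p) (hp1 : p < 1) {N q m : ℕ}
    (hN : m + 3 ≤ N) (hq1 : q ≤ 2 * m + 3) (hq2 : m + 4 ≤ q) :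
    expectedBetti N q p m * expectedBetti N q p (m + 2) ≤
      (expectedBetti N q p (m + 1)) ^ 2 := by
  obtain ⟨k, hk⟩ : ∃ k, q = m + 4 + k := ⟨q - (m+4), by omega⟩
  obtain ⟨j, hj⟩ : ∃ j, 2 * m + 3 = q + j := ⟨2*m+3 - q, by omega⟩
  rw [expectedBetti_eq N q p m (k+2) j (by omega) (by omega),
      expectedBetti_eq N q p (m+1) (k+1) (j+2) (by omega) (by omega),
      expectedBetti_eq N q p (m+2) k (j+4) (by omega) (by omega)]
  have hs : (0:ℝ) < 1 - p := by linarith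
  have key : (N.choose (m+1) * N.choose (m+1+2)) * ((m+1).choose (k+2) * (m+1+2).choose k)
      ≤ ((N.choose (m+1+1))^2) * (((m+1+1).choose (k+1))^2) :=
    Nat.mul_le_mul (choose_row_logconcave N (m+1))
      (choose_diag_logconcave (m+1) k (by omega))
  have keyR : ((N.choose (m+1) * N.choose (m+3)) * ((m+1).choose (k+2) * (m+3).choose k) : ℝ)
      ≤ ((N.choose (m+2):ℝ)^2) * (((m+2).choose (k+1):ℝ)^2) := by
    exact_mod_cast key
  calc (N.choose (m+1) : ℝ) * ((m+1).choose (k+2) : ℝ) * p ^ (k+2) * (1-p) ^ j *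
        ((N.choose (m+2+1) : ℝ) * ((m+2+1).choose k : ℝ) * p ^ k * (1-p) ^ (j+4))
      = ((N.choose (m+1) * N.choose (m+3) : ℕ) * ((m+1).choose (k+2) * (m+3).choose k : ℕ) : ℝ)
          * (p ^ (2*k+2) * (1-p) ^ (2*j+4)) := by push_cast; ring
    _ ≤ (((N.choose (m+2):ℝ))^2 * (((m+2).choose (k+1):ℝ))^2)
          * (p ^ (2*k+2) * (1-p) ^ (2*j+4)) := by
        refine mul_le_mul_of_nonneg_right ?_
          (mul_nonneg (pow_nonneg hp0.le _) (pow_nonneg hs.le _))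
        push_cast
        exact keyR
    _ = ((N.choose (m+1+1) : ℝ) * ((m+1+1).choose (k+1) : ℝ) * p ^ (k+1) * (1-p) ^ (j+2))^2 := by
        push_cast; ring

/-- Main theorem: For `d > 1/2`, `p ∈ (0,1)`, and `q` sufficiently large
(in particular `q > max {4, 5/(2d-1)}`) with `N + 1 = dq`, the sequence
`m ↦ E[β̃ₘ]` of expected reduced Betti numbers is unimodal in `m`. -/
theorem expected_betti_unimodal (d p : ℝ) (hd : 1 / 2 < d) (hp : p ∈ Set.Ioo (0 : ℝ) 1) :
    ∃ Q : ℕ, ∀ q N : ℕ, Q ≤ q → (q : ℝ) > max 4 (5 / (2 * d - 1)) →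
      (N : ℝ) + 1 = d * q →
      ∃ m₀ : ℕ, (∀ m : ℕ, m < m₀ → expectedBetti N q p m ≤ expectedBetti N q p (m + 1)) ∧
        (∀ m : ℕ, m₀ ≤ m → expectedBetti N q p (m + 1) ≤ expectedBetti N q p m) := by
  classical
  obtain ⟨hp0, hp1⟩ := hp
  refine ⟨0, fun q N _ _ _ => ?_⟩
  set E : ℕ → ℝ := expectedBetti N q p with hE
  have hnonneg : ∀ m, 0 ≤ E m := fun m => expectedBetti_nonneg hp0 hp1 N q m
  set P : ℕ → Prop := fun m => q ≤ 2 * m + 3 ∧ E (m + 1) ≤ E m with hP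
  have hex : ∃ m, P m := by
    refine ⟨q, by omega, ?_⟩
    have : E (q + 1) = 0 := expectedBetti_zero_of_lt (by omega)
    rw [this]; exact hnonneg q
  refine ⟨Nat.find hex, fun m hm => ?_, ?_⟩
  · -- increasing part
    have hnot : ¬ P m := Nat.find_min hex hm
    by_cases hq : q ≤ 2 * m + 3
    · have : ¬ E (m + 1) ≤ E m := fun h => hnot ⟨hq, h⟩
      exact (not_le.mp this).le
    · -- E m = 0 since q > 2m+3
      have hm0 : E m = 0 := by
        by_contra h
        exact hq (expectedBetti_support h).2.2
      rw [hm0]; exact hnonneg (m + 1)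
  · -- decreasing part: prove ∀ m ≥ m₀, P m by induction
    have hall : ∀ m, Nat.find hex ≤ m → P m := by
      intro m hm
      induction m, hm using Nat.le_induction with
      | base => exact Nat.find_spec hex
      | succ m _ ih =>
        obtain ⟨hq1, hle⟩ := ih
        refine ⟨by omega, ?_⟩
        rcases eq_or_ne (E (m + 1 + 1)) 0 with h0 | h0
        · rw [h0]; exact hnonneg (m + 1)
        · obtain ⟨hN2, hq2, _⟩ := expectedBetti_support h0
          have hlc := expectedBetti_logconcave hp0 hp1 (show m + 3 ≤ N by omega) hq1
            (show m + 4 ≤ q by omega)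
          have hpos : 0 < E (m + 1) :=
            expectedBetti_pos hp0 hp1 (show (m+1) + 1 ≤ N by omega)
              (show (m+1) + 2 ≤ q by omega) (show q ≤ 2 * (m+1) + 3 by omega)
          have hm2 : E (m + 2) = E (m + 1 + 1) := by norm_num
          have hnn := hnonneg (m + 2)
          nlinarith [hlc, mul_nonneg (sub_nonneg.mpr hle) hnn, hpos,
            mul_pos hpos hpos]
    exact fun m hm => (hall m hm).2
end
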